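/- If β > 1/(4μ), then the function L̃_{β,μ}(V,h,x) = Σ_s ρ₀(s) V(s) + (1/(2μ)) Σ_{s,a} w(s,a) x(s,a) Z(V,h,s,a) + (β/2) Σ_{s,a} w(s,a)(x(s,a) − Z(V,h,s,a))², where Z(V,h,s,a) = x̄(s,a) + μ(h(s,a) + r(s,a) + γ Σ_{s'} P(s'|s,a) V(s') − V(s)) for a fixed x̄, is, for each fixed (V,h), a strongly convex function of x with strong convexity modulus (1/μ)(1 − 1/(4μβ)) · min_{s,a} w(s,a) (in the Euclidean norm on ℝ^{S×A}). -/
import Mathlib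


/-- The Z-function with fixed reference multiplier `x̄`. -/
def Zfun {S A : Type*} [Fintype S]
    (P : S → A → S → ℝ) (r : S → A → ℝ) (γ μ : ℝ)
    (xbar : S → A → ℝ) (V : S → ℝ) (h : S → A → ℝ) (s : S) (a : A) : ℝ :=
  xbar s a + μ * (h s a + r s a + γ * (∑ s', P s a s' * V s') - V s)

/-- The composite penalty objective `L̃_{β,μ}(V,h,x)`. -/
noncomputable def Ltilde {S A : Type*} [Fintype S] [Fintype A]
    (P : S → A → S → ℝ) (r : S → A → ℝ) (ρ₀ : S → ℝ) (γ μ β : ℝ)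
    (w : S → A → ℝ) (xbar : S → A → ℝ)
    (V : S → ℝ) (h x : S → A → ℝ) : ℝ :=
  (∑ s, ρ₀ s * V s)
    + (1 / (2 * μ)) * ∑ s, ∑ a, w s a * x s a * Zfun P r γ μ xbar V h s a
    + (β / 2) * ∑ s, ∑ a, w s a * (x s a - Zfun P r γ μ xbar V h s a) ^ 2

/-- For each fixed `(V,h)`, the composite penalty objective is strongly convex
in the multiplier `x` with modulus `(1/μ)(1 - 1/(4μβ)) · min_{s,a} w(s,a)`
in the Euclidean norm on `ℝ^{S×A}`. -/
theorem Ltilde_strongly_convex_in_x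
    {S A : Type*} [Fintype S] [Fintype A] [Nonempty S] [Nonempty A]
    (P : S → A → S → ℝ) (r : S → A → ℝ) (ρ₀ : S → ℝ)
    (γ : ℝ) (hγ : 0 < γ) (hγ1 : γ < 1)
    (w : S → A → ℝ) (hw : ∀ s a, 0 < w s a)
    (μ β : ℝ) (hμ : 0 < μ) (hβ : β > 1 / (4 * μ))
    (xbar : S → A → ℝ) (V : S → ℝ) (h : S → A → ℝ) :
    ∀ (x y : S → A → ℝ) (t : ℝ), 0 ≤ t → t ≤ 1 →
      Ltilde P r ρ₀ γ μ β w xbar V h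
          (fun s a => t * x s a + (1 - t) * y s a)
        ≤ t * Ltilde P r ρ₀ γ μ β w xbar V h x
          + (1 - t) * Ltilde P r ρ₀ γ μ β w xbar V h y
          - (((1 / μ) * (1 - 1 / (4 * μ * β))
              * Finset.univ.inf' Finset.univ_nonempty
                  (fun p : S × A => w p.1 p.2)) / 2)
            * t * (1 - t) * ∑ s, ∑ a, (x s a - y s a) ^ 2 := by
  intro x y t ht ht1
  set Z := Zfun P r γ μ xbar V h with hZ
  set m := Finset.univ.inf' Finset.univ_nonempty (fun p : S × A => w p.1 p.2) with hm
  have hm_pos : 0 < m := by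
    rw [hm]
    exact (Finset.lt_inf'_iff _).mpr fun p _ => hw p.1 p.2
  have hm_le : ∀ s a, m ≤ w s a := fun s a =>
    Finset.inf'_le _ (Finset.mem_univ (s, a))
  have hβ0 : (0:ℝ) < β := lt_trans (by positivity) hβ
  have hLin : ∑ s, ∑ a, w s a * (t * x s a + (1 - t) * y s a) * Z s a
      = t * (∑ s, ∑ a, w s a * x s a * Z s a)
        + (1 - t) * (∑ s, ∑ a, w s a * y s a * Z s a) := by
    simp only [Finset.mul_sum]
    rw [← Finset.sum_add_distrib]
    refine Finset.sum_congr rfl fun s _ => ?_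
    rw [← Finset.sum_add_distrib]
    exact Finset.sum_congr rfl fun a _ => by ring
  have hQuad : ∑ s, ∑ a, w s a * ((t * x s a + (1 - t) * y s a) - Z s a) ^ 2
      = t * (∑ s, ∑ a, w s a * (x s a - Z s a) ^ 2)
        + (1 - t) * (∑ s, ∑ a, w s a * (y s a - Z s a) ^ 2)
        - t * (1 - t) * ∑ s, ∑ a, w s a * (x s a - y s a) ^ 2 := by
    simp only [Finset.mul_sum]
    rw [← Finset.sum_add_distrib, ← Finset.sum_sub_distrib]
    refine Finset.sum_congr rfl fun s _ => ?_
    rw [← Finset.sum_add_distrib, ← Finset.sum_sub_distrib]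
    exact Finset.sum_congr rfl fun a _ => by ring
  set Sw := ∑ s, ∑ a, w s a * (x s a - y s a) ^ 2 with hSw
  set Sd := ∑ s, ∑ a, (x s a - y s a) ^ 2 with hSd
  have hEq : Ltilde P r ρ₀ γ μ β w xbar V h (fun s a => t * x s a + (1 - t) * y s a)
      = t * Ltilde P r ρ₀ γ μ β w xbar V h x
        + (1 - t) * Ltilde P r ρ₀ γ μ β w xbar V h y
        - (β / 2) * t * (1 - t) * Sw := by
    simp only [Ltilde, ← hZ]
    rw [hLin, hQuad]
    ring
  rw [hEq]
  have hSd_nonneg : 0 ≤ Sd :=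
    Finset.sum_nonneg fun s _ => Finset.sum_nonneg fun a _ => sq_nonneg _
  have hmS : m * Sd ≤ Sw := by
    rw [hSd, hSw, Finset.mul_sum]
    refine Finset.sum_le_sum fun s _ => ?_
    rw [Finset.mul_sum]
    exact Finset.sum_le_sum fun a _ =>
      mul_le_mul_of_nonneg_right (hm_le s a) (sq_nonneg _)
  have hA : (1 / μ) * (1 - 1 / (4 * μ * β)) ≤ β := by
    have hrw : β - (1 / μ) * (1 - 1 / (4 * μ * β)) = (2 * μ * β - 1) ^ 2 / (4 * μ ^ 2 * β) := by
      field_simp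
      ring
    have hnn : 0 ≤ (2 * μ * β - 1) ^ 2 / (4 * μ ^ 2 * β) :=
      div_nonneg (sq_nonneg _) (by positivity)
    linarith [hrw, hnn]
  have hc : (1 / μ) * (1 - 1 / (4 * μ * β)) * m * Sd ≤ β * Sw := by
    calc (1 / μ) * (1 - 1 / (4 * μ * β)) * m * Sd
        ≤ β * m * Sd :=
          mul_le_mul_of_nonneg_right
            (mul_le_mul_of_nonneg_right hA hm_pos.le) hSd_nonneg
      _ ≤ β * Sw := by
          rw [mul_assoc]
          exact mul_le_mul_of_nonneg_left hmS hβ0.le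
  have ht2 : (0:ℝ) ≤ t * (1 - t) / 2 := by nlinarith
  have h2 := mul_le_mul_of_nonneg_left hc ht2
  nlinarith [h2]
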